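/- Let n ≥ 4 be an integer and let z ∈ C²(ℝ) solve the Emden-type ODE z̈(t) + (n−4+2z(t))·ż(t) − 2(n−2)·(z(t)−z(t)²) = 0 for all t ∈ ℝ. Suppose there exists C < ∞ with 0 < z(t) < C and |ż(t)| < C for all t ∈ ℝ, and that lim_{t→−∞} z(t) = 0, lim_{t→−∞} ż(t) = 0 and lim_{t→−∞} ż(t)/z(t) = 2. Then lim_{t→∞} z(t) = 1 and lim_{t→∞} ż(t) = 0. -/

import Mathlib

open Set Filter

noncomputable section

/-- The Emden-type ODE `z̈ + (n−4+2z)·ż − 2(n−2)·(z−z²) = 0` on all of `ℝ`. -/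
def EmdenODE (n : ℕ) (z : ℝ → ℝ) : Prop :=
  ∀ t : ℝ, deriv (deriv z) t + ((n : ℝ) - 4 + 2 * z t) * deriv z t
    - 2 * ((n : ℝ) - 2) * (z t - (z t) ^ 2) = 0

set_option maxHeartbeats 1600000 in
theorem stmt15 (n : ℕ) (hn : 4 ≤ n) (z : ℝ → ℝ) (hz : ContDiff ℝ 2 z)
    (hode : EmdenODE n z)
    (C : ℝ) (hbd : ∀ t : ℝ, 0 < z t ∧ z t < C ∧ |deriv z t| < C)
    (h1 : Tendsto z atBot (nhds 0))
    (h2 : Tendsto (deriv z) atBot (nhds 0))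
    (h3 : Tendsto (fun t => deriv z t / z t) atBot (nhds 2)) :
    Tendsto z atTop (nhds 1) ∧ Tendsto (deriv z) atTop (nhds 0) := by
  -- notation
  set k : ℝ := (n : ℝ) - 2 with hk
  set a : ℝ := (n : ℝ) - 4 with ha
  have hk2 : (2:ℝ) ≤ k := by
    have : (4:ℝ) ≤ (n:ℝ) := by exact_mod_cast hn
    simp [hk]; linarith
  have ha0 : 0 ≤ a := by
    have : (4:ℝ) ≤ (n:ℝ) := by exact_mod_cast hn
    simp [ha]; linarith
  clear_value k a
  -- regularity
  have hz' : ContDiff ℝ ((1:WithTop ℕ∞) + 1) z := by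
    exact_mod_cast hz
  have hreg := (contDiff_succ_iff_deriv (n := 1)).mp hz'
  have hd1 : Differentiable ℝ z := hreg.1
  have hd2 : Differentiable ℝ (deriv z) := hreg.2.2.differentiable one_ne_zero
  have hc2 : Continuous (deriv (deriv z)) := (contDiff_one_iff_deriv.mp hreg.2.2).2
  -- the energy
  set E : ℝ → ℝ := fun t => (deriv z t)^2/2 + 2*k*((z t)^3/3 - (z t)^2/2) with hE
  have hEderiv : ∀ t, HasDerivAt E (-(a + 2 * z t) * (deriv z t)^2) t := by
    intro t
    have hz1 : HasDerivAt z (deriv z t) t := (hd1 t).hasDerivAt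
    have hz2 : HasDerivAt (deriv z) (deriv (deriv z) t) t := (hd2 t).hasDerivAt
    have h := ((hz2.pow 2).div_const 2).add
      ((((hz1.pow 3).div_const 3).sub ((hz1.pow 2).div_const 2)).const_mul (2*k))
    refine h.congr_deriv ?_
    have hodet := hode t
    have hode' : deriv (deriv z) t = 2*k*(z t - z t ^ 2) - (a + 2 * z t) * deriv z t := by
      simp only [hk, ha]; linarith
    rw [hode']
    ring
  have hEdiff : Differentiable ℝ E := fun t => (hEderiv t).differentiableAt
  have hEanti : Antitone E := by
    apply antitone_of_deriv_nonpos hEdiff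
    intro t
    rw [(hEderiv t).deriv]
    have := (hbd t).1
    nlinarith [sq_nonneg (deriv z t)]
  have hEbot : Tendsto E atBot (nhds 0) := by
    have h : Tendsto E atBot (nhds ((0:ℝ)^2/2 + 2*k*((0:ℝ)^3/3 - (0:ℝ)^2/2))) :=
      ((h2.pow 2).div_const 2).add
        ((((h1.pow 3).div_const 3).sub ((h1.pow 2).div_const 2)).const_mul (2*k))
    simpa using h
  have hEnonpos : ∀ t, E t ≤ 0 := by
    intro t
    refine ge_of_tendsto hEbot (eventually_atBot.2 ⟨t, fun s hs => hEanti hs⟩)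
  -- consequences: z ≤ 3/2 and |ż| ≤ √(2k) z
  have hz32 : ∀ t, z t ≤ 3/2 := by
    intro t
    by_contra hlt
    push_neg at hlt
    have h0 := (hbd t).1
    have hEt : deriv z t ^ 2 / 2 + 2 * k * (z t ^ 3 / 3 - z t ^ 2 / 2) ≤ 0 := hEnonpos t
    have key : 0 < z t ^ 2 * (z t - 3/2) := mul_pos (pow_pos h0 2) (by linarith)
    nlinarith [sq_nonneg (deriv z t), mul_le_mul_of_nonneg_right hk2 key.le]
  have hzsq : ∀ t, (deriv z t)^2 ≤ 2*k*(z t)^2 := by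
    intro t
    have h0 := (hbd t).1
    have hEt : deriv z t ^ 2 / 2 + 2 * k * (z t ^ 3 / 3 - z t ^ 2 / 2) ≤ 0 := hEnonpos t
    nlinarith [pow_pos h0 3, sq_nonneg (z t)]
  -- pointwise bound on z^2 and on |ż|
  have hzsq94 : ∀ t, (z t)^2 ≤ 9/4 := by
    intro t; nlinarith [(hbd t).1, hz32 t]
  set B : ℝ := (9*k/2 + 1)/2 with hBdef
  clear_value B
  have hBpos : 0 < B := by simp only [hBdef]; linarith
  have hB : ∀ t, |deriv z t| ≤ B := by
    intro t
    have h1' := hzsq t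
    have h2' := hzsq94 t
    have h3' : (deriv z t)^2 ≤ 9*k/2 := by nlinarith
    simp only [hBdef]
    nlinarith [sq_nonneg (|deriv z t| - 1), sq_abs (deriv z t)]
  -- bound on the second derivative
  have hode' : ∀ t, deriv (deriv z) t = 2*k*(z t - z t^2) - (a + 2 * z t) * deriv z t := by
    intro t; have := hode t; simp only [hk, ha]; linarith
  set M : ℝ := 2*k*(15/4) + (a+3)*B with hMdef
  clear_value M
  have hMpos : 0 < M := by
    simp only [hMdef]; nlinarith [mul_nonneg (by linarith : (0:ℝ) ≤ a + 3) hBpos.le]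
  have hM : ∀ t, |deriv (deriv z) t| ≤ M := by
    intro t
    rw [hode']
    have h0 := (hbd t).1
    have h32 := hz32 t
    have h94 := hzsq94 t
    have habs1 : |2*k*(z t - z t^2)| ≤ 2*k*(15/4) := by
      rw [abs_mul, abs_of_nonneg (by linarith : (0:ℝ) ≤ 2*k)]
      have : |z t - z t^2| ≤ 15/4 := by
        rw [abs_le]; constructor <;> nlinarith [sq_nonneg (z t)]
      nlinarith
    have habs2 : |(a + 2 * z t) * deriv z t| ≤ (a+3)*B := by
      rw [abs_mul, abs_of_nonneg (by linarith : (0:ℝ) ≤ a + 2 * z t)]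
      apply mul_le_mul (by linarith) (hB t) (abs_nonneg _) (by linarith)
    calc |2*k*(z t - z t^2) - (a + 2 * z t) * deriv z t|
        ≤ |2*k*(z t - z t^2)| + |(a + 2 * z t) * deriv z t| := abs_sub _ _
      _ ≤ 2*k*(15/4) + (a+3)*B := add_le_add habs1 habs2
      _ = M := hMdef.symm
  -- Lipschitz bound for deriv z
  have hlip : ∀ s t : ℝ, |deriv z s - deriv z t| ≤ M * |s - t| := by
    intro s t
    have := convex_univ.norm_image_sub_le_of_norm_deriv_le (f := deriv z)
      (fun x _ => hd2 x) (fun x _ => by simpa [Real.norm_eq_abs] using hM x)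
      (Set.mem_univ t) (Set.mem_univ s)
    simpa [Real.norm_eq_abs] using this
  -- E is bounded below and converges at +infinity
  have hElb : ∀ t, -3*k ≤ E t := by
    intro t
    have h0 := (hbd t).1
    have h94 := hzsq94 t
    have hEt : E t = deriv z t ^ 2 / 2 + 2 * k * (z t ^ 3 / 3 - z t ^ 2 / 2) := rfl
    rw [hEt]
    nlinarith [sq_nonneg (deriv z t), pow_pos h0 3, mul_pos h0 h0]
  have hEeq : ∀ t, E t = deriv z t ^ 2 / 2 + 2 * k * (z t ^ 3 / 3 - z t ^ 2 / 2) :=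
    fun t => rfl
  clear_value E
  set L : ℝ := ⨅ t, E t with hLdef
  clear_value L
  have hbddE : BddBelow (Set.range E) := ⟨-3*k, by rintro x ⟨t, rfl⟩; exact hElb t⟩
  have hEtop : Tendsto E atTop (nhds L) := by rw [hLdef]; exact tendsto_atTop_ciInf hEanti hbddE
  have hLle : ∀ t, L ≤ E t := by intro t; rw [hLdef]; exact ciInf_le hbddE t
  have hLpos : L ≤ 0 := le_trans (hLle 0) (hEnonpos 0)
  have hk0 : (0:ℝ) < k := by linarith
  -- Barbalat: deriv z → 0 at +infinity
  have hdz0 : Tendsto (deriv z) atTop (nhds 0) := by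
    rw [Metric.tendsto_nhds]
    by_contra hcon
    push_neg at hcon
    obtain ⟨ε, hε, hfreq⟩ := hcon
    have hfreq' : ∀ b : ℝ, ∃ t ≥ b, ε ≤ |deriv z t| := by
      intro b
      obtain ⟨t, ht, h⟩ := (frequently_atTop.1 hfreq) b
      exact ⟨t, ht, by simpa [Real.dist_eq, not_lt] using h⟩
    set ρ : ℝ := ε^2/(12*k) with hρdef
    have hρpos : 0 < ρ := by
      apply div_pos (pow_pos hε 2); linarith
    clear_value ρ
    have hzlb : ∀ s, ε/2 ≤ |deriv z s| → ρ ≤ z s := by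
      intro s hs
      have h0 := (hbd s).1
      have h32 := hz32 s
      have hq := hzsq s
      have hsq : (ε/2)^2 ≤ (deriv z s)^2 := by
        rw [← sq_abs (deriv z s)]
        exact pow_le_pow_left₀ (by positivity) hs 2
      have e1 : z s * z s ≤ z s * (3/2) := mul_le_mul_of_nonneg_left h32 h0.le
      simp only [hρdef]
      rw [div_le_iff₀ (by linarith)]
      nlinarith [mul_le_mul_of_nonneg_left e1 (by linarith : (0:ℝ) ≤ 2*k)]
    set δ : ℝ := ε/(2*M) with hδdef
    have hδpos : 0 < δ := div_pos hε (by linarith)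
    clear_value δ
    set d : ℝ := (2*ρ*(ε^2/4))*δ with hddef
    have hdpos : 0 < d := by
      simp only [hddef]
      nlinarith [mul_pos (mul_pos hρpos (pow_pos hε 2)) hδpos]
    clear_value d
    have hdrop : ∀ t, ε ≤ |deriv z t| → E (t+δ) + d ≤ E t := by
      intro t ht
      have hmid : ∀ s ∈ Icc t (t+δ), ε/2 ≤ |deriv z s| := by
        intro s hs
        have habs : |s - t| ≤ δ := by
          rw [abs_of_nonneg (by linarith [hs.1])]; linarith [hs.2]
        have e1 : |deriv z s - deriv z t| ≤ M * δ :=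
          le_trans (hlip s t) (mul_le_mul_of_nonneg_left habs hMpos.le)
        have e2 : M * δ = ε / 2 := by
          rw [hδdef]; field_simp
        have e3 : |deriv z t - deriv z s| = |deriv z s - deriv z t| := abs_sub_comm _ _
        have e4 := abs_sub_abs_le_abs_sub (deriv z t) (deriv z s)
        linarith only [ht, e1, e2, e3, e4]
      set F : ℝ → ℝ := fun s => E s + (2*ρ*(ε^2/4))*s with hF
      have hFdiff : Differentiable ℝ F := hEdiff.add ((differentiable_id.const_mul _))
      have hanti : AntitoneOn F (Icc t (t+δ)) := by
        apply antitoneOn_of_deriv_nonpos (convex_Icc _ _)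
          hFdiff.continuous.continuousOn hFdiff.differentiableOn
        intro x hx
        rw [interior_Icc] at hx
        have hFd : HasDerivAt F (-(a + 2*z x)*(deriv z x)^2 + (2*ρ*(ε^2/4))) x := by
          have := (hEderiv x).add ((hasDerivAt_id x).const_mul (2*ρ*(ε^2/4)))
          exact this.congr_deriv (by simp)
        rw [hFd.deriv]
        have hx' : x ∈ Icc t (t+δ) := Ioo_subset_Icc_self hx
        have e1 := hmid x hx'
        have e2 := hzlb x e1
        have e3 : (ε/2)^2 ≤ (deriv z x)^2 := by
          rw [← sq_abs (deriv z x)]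
          exact pow_le_pow_left₀ (by positivity) e1 2
        have h0 := (hbd x).1
        nlinarith [mul_le_mul_of_nonneg_left e3 (by linarith : (0:ℝ) ≤ a + 2*z x),
          mul_le_mul_of_nonneg_right e2 (sq_nonneg (deriv z x))]
      have hFle := hanti (left_mem_Icc.2 (by linarith)) (right_mem_Icc.2 (by linarith))
        (by linarith)
      simp only [hF] at hFle
      simp only [hddef]
      nlinarith [hFle]
    obtain ⟨T, hT⟩ : ∃ T : ℝ, E T < L + d := by
      have hev : ∀ᶠ t in atTop, E t < L + d :=
        hEtop.eventually (eventually_lt_nhds (by linarith))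
      obtain ⟨T, hT⟩ := hev.exists
      exact ⟨T, hT⟩
    obtain ⟨t, htT, hbad⟩ := hfreq' T
    have e1 := hdrop t hbad
    have e2 := hLle (t+δ)
    have e3 : E t ≤ E T := hEanti htT
    linarith
  -- L is strictly negative
  have h2k0 : (2*k) ≠ 0 := by positivity
  have hLneg : L < 0 := by
    rcases lt_or_eq_of_le hLpos with h | h
    · exact h
    · exfalso
      have hE0 : ∀ t, E t = 0 := fun t => le_antisymm (hEnonpos t) (h ▸ hLle t)
      have hdzero : ∀ t, deriv z t = 0 := by
        intro t
        have hconst : HasDerivAt E 0 t := by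
          have hfun : E = fun _ => (0:ℝ) := funext hE0
          rw [hfun]; exact hasDerivAt_const t 0
        have huniq := hconst.unique (hEderiv t)
        have h0 := (hbd t).1
        have hz2' : (a + 2 * z t) * (deriv z t)^2 = 0 := by linarith [huniq]
        rcases mul_eq_zero.1 hz2' with h' | h'
        · exfalso; linarith
        · exact pow_eq_zero_iff (by norm_num) |>.1 h'
      have hzconst : ∀ t, z t = z 0 := fun t => is_const_of_deriv_eq_zero hd1 hdzero t 0
      have hzc : Tendsto z atBot (nhds (z 0)) := by
        have hfun : z = fun _ => z 0 := funext hzconst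
        nth_rewrite 1 [hfun]; exact tendsto_const_nhds
      have := tendsto_nhds_unique h1 hzc
      exact absurd this.symm (ne_of_gt (hbd 0).1)
  -- the cubic part converges
  set g : ℝ → ℝ := fun x => x^3/3 - x^2/2 with hgdef
  clear_value g
  have hgc : Continuous g := by rw [hgdef]; continuity
  have hgz : Tendsto (fun t => g (z t)) atTop (nhds (L/(2*k))) := by
    have h' : Tendsto (fun t => (E t - (deriv z t)^2/2)/(2*k)) atTop
        (nhds ((L - 0^2/2)/(2*k))) :=
      (hEtop.sub ((hdz0.pow 2).div_const 2)).div_const (2*k)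
    have heq : (fun t => (E t - (deriv z t)^2/2)/(2*k)) = fun t => g (z t) := by
      funext t
      rw [hEeq t, hgdef]
      field_simp
      ring
    rw [heq] at h'
    simpa using h'
  -- liminf and limsup
  have hbdd_le : IsBoundedUnder (· ≤ ·) atTop z := isBoundedUnder_of ⟨3/2, hz32⟩
  have hbdd_ge : IsBoundedUnder (· ≥ ·) atTop z :=
    isBoundedUnder_of ⟨0, fun t => (hbd t).1.le⟩
  set α : ℝ := liminf z atTop with hα
  set β : ℝ := limsup z atTop with hβ
  clear_value α β
  have hαβ : α ≤ β := by rw [hα, hβ]; exact liminf_le_limsup hbdd_le hbdd_ge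
  have hkey : ∀ m, α < m → m < β → g m = L/(2*k) := by
    intro m hm1 hm2
    have f1 : ∃ᶠ t in atTop, z t < m :=
      frequently_lt_of_liminf_lt hbdd_le.isCoboundedUnder_ge (hα ▸ hm1)
    have f2 : ∃ᶠ t in atTop, m < z t :=
      frequently_lt_of_lt_limsup hbdd_ge.isCoboundedUnder_le (hβ ▸ hm2)
    have hfr : ∃ᶠ t in atTop, z t = m := by
      rw [frequently_atTop]
      intro b
      obtain ⟨t1, ht1b, ht1⟩ := frequently_atTop.1 f1 b
      obtain ⟨t2, ht2t1, ht2⟩ := frequently_atTop.1 f2 t1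
      have hc : ContinuousOn z (Icc t1 t2) := hd1.continuous.continuousOn
      have hmem : m ∈ Icc (z t1) (z t2) := ⟨ht1.le, ht2.le⟩
      obtain ⟨s, hs, hsz⟩ := intermediate_value_Icc ht2t1 hc hmem
      exact ⟨s, le_trans ht1b hs.1, hsz⟩
    exact tendsto_nhds_unique_of_frequently_eq tendsto_const_nhds hgz
      (hfr.mono fun t ht => by rw [ht])
  -- mean value roots of g'
  have hroot : ∀ p q : ℝ, α < p → p < q → q < β → ∃ ξ, p < ξ ∧ ξ < q ∧ ξ^2 - ξ = 0 := by
    intro p q hp hpq hq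
    have hgp : g p = L/(2*k) := hkey p hp (hpq.trans hq)
    have hgq : g q = L/(2*k) := hkey q (hp.trans hpq) hq
    obtain ⟨ξ, hξ, hder⟩ := exists_deriv_eq_slope g hpq hgc.continuousOn
      (fun x _ => by
        rw [hgdef]
        exact (((differentiable_id.pow 3).div_const 3).sub
          ((differentiable_id.pow 2).div_const 2)).differentiableAt.differentiableWithinAt)
    have hg' : HasDerivAt g (ξ^2 - ξ) ξ := by
      rw [hgdef]
      have h' := ((hasDerivAt_pow 3 ξ).div_const 3).sub ((hasDerivAt_pow 2 ξ).div_const 2)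
      refine h'.congr_deriv ?_
      push_cast
      ring
    refine ⟨ξ, hξ.1, hξ.2, ?_⟩
    rw [← hg'.deriv, hder, hgp, hgq]
    simp
  -- liminf = limsup
  have hαeqβ : α = β := by
    by_contra hne
    have hlt : α < β := lt_of_le_of_ne hαβ hne
    have hd5 : 0 < (β - α)/5 := by linarith
    obtain ⟨ξ1, e11, e12, e13⟩ := hroot (α + (β-α)/5) (α + 2*(β-α)/5)
      (by linarith) (by linarith) (by linarith)
    obtain ⟨ξ2, e21, e22, e23⟩ := hroot (α + 2*(β-α)/5) (α + 3*(β-α)/5)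
      (by linarith) (by linarith) (by linarith)
    obtain ⟨ξ3, e31, e32, e33⟩ := hroot (α + 3*(β-α)/5) (α + 4*(β-α)/5)
      (by linarith) (by linarith) (by linarith)
    have r1 : ξ1 = 0 ∨ ξ1 = 1 := by
      rcases mul_eq_zero.1 (show ξ1 * (ξ1 - 1) = 0 by nlinarith [e13]) with h | h
      · exact Or.inl h
      · exact Or.inr (by linarith)
    have r2 : ξ2 = 0 ∨ ξ2 = 1 := by
      rcases mul_eq_zero.1 (show ξ2 * (ξ2 - 1) = 0 by nlinarith [e23]) with h | h
      · exact Or.inl h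
      · exact Or.inr (by linarith)
    have r3 : ξ3 = 0 ∨ ξ3 = 1 := by
      rcases mul_eq_zero.1 (show ξ3 * (ξ3 - 1) = 0 by nlinarith [e33]) with h | h
      · exact Or.inl h
      · exact Or.inr (by linarith)
    have o12 : ξ1 < ξ2 := by linarith
    have o23 : ξ2 < ξ3 := by linarith
    rcases r1 with h1' | h1' <;> rcases r2 with h2' | h2' <;> rcases r3 with h3' | h3' <;>
      linarith
  -- z converges to α
  have hzα : Tendsto z atTop (nhds α) := by
    apply tendsto_of_liminf_eq_limsup hα.symm (by rw [← hβ, ← hαeqβ]) hbdd_le hbdd_ge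
  have hgα : g α = L/(2*k) :=
    tendsto_nhds_unique ((hgc.tendsto α).comp hzα) hgz
  have hα0 : α ≠ 0 := by
    intro h
    rw [h, hgdef] at hgα
    norm_num at hgα
    rcases div_eq_zero_iff.1 hgα.symm with h' | h'
    · exact absurd h' hLneg.ne
    · exact h2k0 h'
  -- the second derivative converges to 2k(α - α²)
  have hddz : Tendsto (deriv (deriv z)) atTop (nhds (2*k*(α - α^2))) := by
    have h' : Tendsto (fun t => 2*k*(z t - z t^2) - (a + 2*z t)*deriv z t) atTop
        (nhds (2*k*(α - α^2) - (a + 2*α)*0)) := by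
      apply Tendsto.sub
      · exact (hzα.sub (hzα.pow 2)).const_mul (2*k)
      · exact (tendsto_const_nhds.add (hzα.const_mul 2)).mul hdz0
    have heq : (fun t => 2*k*(z t - z t^2) - (a+2*z t)*deriv z t) = deriv (deriv z) :=
      funext fun t => (hode' t).symm
    rw [heq] at h'
    simpa using h'
  -- the limit of the second derivative must vanish
  have hq0 : 2*k*(α - α^2) = 0 := by
    by_contra hq
    set q : ℝ := 2*k*(α - α^2) with hqdef
    clear_value q
    have hq' : 0 < |q| := abs_pos.2 hq
    have hev1 : ∀ᶠ t in atTop, |deriv (deriv z) t - q| < |q|/2 := by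
      rw [Metric.tendsto_nhds] at hddz
      simpa [Real.dist_eq] using hddz (|q|/2) (by linarith)
    have hev2 : ∀ᶠ t in atTop, |deriv z t| < |q|/8 := by
      rw [Metric.tendsto_nhds] at hdz0
      simpa [Real.dist_eq] using hdz0 (|q|/8) (by linarith)
    obtain ⟨T, hT⟩ := eventually_atTop.1 (hev1.and hev2)
    obtain ⟨ξ, hξ, hslope⟩ := exists_deriv_eq_slope (deriv z) (show T < T+1 by linarith)
      (hd2.continuous.continuousOn) (hd2.differentiableOn)
    have hval : deriv (deriv z) ξ = deriv z (T+1) - deriv z T := by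
      rw [hslope]; norm_num
    have hb1 := (hT ξ hξ.1.le).1
    have hb2 := (hT T le_rfl).2
    have hb3 := (hT (T+1) (by linarith)).2
    have e5 : |deriv z (T+1) - deriv z T| ≤ |deriv z (T+1)| + |deriv z T| := abs_sub _ _
    have e6 : |q| - |deriv (deriv z) ξ| ≤ |deriv (deriv z) ξ - q| := by
      rw [abs_sub_comm]
      exact abs_sub_abs_le_abs_sub q _
    rw [hval] at hb1 e6
    linarith
  -- conclude α = 1
  have hαval : α = 1 := by
    rcases mul_eq_zero.1 hq0 with h' | h'
    · exact absurd h' h2k0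
    · rcases mul_eq_zero.1 (show α * (1 - α) = 0 by nlinarith [h']) with h'' | h''
      · exact absurd h'' hα0
      · linarith
  exact ⟨hαval ▸ hzα, hdz0⟩

end
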